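/- For P > 0, the quantity R_β(P) = −(1/(2 ln 2))·exp(1/P)·Ei(−1/P) is strictly positive and strictly increasing in P. -/
import Mathlib


open MeasureTheory Real Set

/-- The exponential integral Ei(z) = −∫_{−z}^∞ exp(−t)/t dt. -/
noncomputable def expIntegralEi (z : ℝ) : ℝ := - ∫ t in Ioi (-z), Real.exp (-t) / t

/-- R_β(P) = −(1/(2 ln 2))·exp(1/P)·Ei(−1/P). -/
noncomputable def Rbeta (P : ℝ) : ℝ :=
  -(1 / (2 * Real.log 2)) * Real.exp (1/P) * expIntegralEi (-(1/P))

noncomputable def gEi (x : ℝ) : ℝ := ∫ s in Ioi (0:ℝ), Real.exp (-s) / (x + s)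

lemma gEi_integrable {x : ℝ} (hx : 0 < x) :
    IntegrableOn (fun s => Real.exp (-s) / (x + s)) (Ioi (0:ℝ)) := by
  have hbase : IntegrableOn (fun s : ℝ => Real.exp (-1 * s)) (Ioi (0:ℝ)) :=
    exp_neg_integrableOn_Ioi 0 one_pos
  have hbase' : IntegrableOn (fun s : ℝ => x⁻¹ * Real.exp (-1 * s)) (Ioi (0:ℝ)) :=
    hbase.const_mul _
  refine hbase'.mono' ?_ ?_
  · apply Measurable.aestronglyMeasurable
    exact (Real.measurable_exp.comp measurable_neg).div (measurable_const.add measurable_id)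
  · filter_upwards [ae_restrict_mem measurableSet_Ioi] with s hs
    have hs0 : (0:ℝ) < s := hs
    have hxs : 0 < x + s := by linarith
    rw [Real.norm_eq_abs, abs_of_nonneg (by positivity)]
    rw [div_le_iff₀ hxs, neg_one_mul]
    calc Real.exp (-s) = x⁻¹ * Real.exp (-s) * x := by field_simp
    _ ≤ x⁻¹ * Real.exp (-s) * (x + s) := by
        apply mul_le_mul_of_nonneg_left (by linarith) (by positivity)

lemma gEi_pos {x : ℝ} (hx : 0 < x) : 0 < gEi x := by
  rw [gEi, setIntegral_pos_iff_support_of_nonneg_ae]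
  · have hsupp : Function.support (fun s => Real.exp (-s) / (x + s)) ∩ Ioi 0 = Ioi 0 := by
      refine inter_eq_right.mpr fun s hs => ?_
      have hs0 : (0:ℝ) < s := hs
      have : 0 < Real.exp (-s) / (x + s) := by positivity
      exact Function.mem_support.mpr (ne_of_gt this)
    rw [hsupp]
    exact Measure.measure_Ioi_pos _ 0
  · filter_upwards [ae_restrict_mem measurableSet_Ioi] with s hs
    have hs0 : (0:ℝ) < s := hs
    simp only [Pi.zero_apply]
    positivity
  · exact gEi_integrable hx

lemma integral_shift (x : ℝ) :
    (∫ t in Ioi x, Real.exp (-t) / t) = ∫ s in Ioi (0:ℝ), Real.exp (-(s + x)) / (s + x) := by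
  have h := MeasurePreserving.setIntegral_preimage_emb
    (measurePreserving_add_right (volume : Measure ℝ) x)
    (measurableEmbedding_addRight x) (fun t => Real.exp (-t) / t) (Ioi x)
  rw [← h]
  congr 1
  ext s
  simp [lt_sub_iff_add_lt]

lemma key (x : ℝ) (hx : 0 < x) :
    (∫ t in Ioi x, Real.exp (-t) / t) = Real.exp (-x) * gEi x := by
  rw [integral_shift x, gEi, ← integral_const_mul]
  congr 1
  ext s
  have h1 : Real.exp (-(s + x)) = Real.exp (-x) * Real.exp (-s) := by
    rw [neg_add, Real.exp_add, mul_comm]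
  rw [h1, add_comm x s, mul_div_assoc]

lemma Rbeta_eq {P : ℝ} (hP : 0 < P) :
    Rbeta P = (1 / (2 * Real.log 2)) * gEi (1/P) := by
  have hx : 0 < 1/P := by positivity
  rw [Rbeta, expIntegralEi, neg_neg, key (1/P) hx]
  rw [show -(1 / (2 * Real.log 2)) * Real.exp (1/P) * -(Real.exp (-(1/P)) * gEi (1/P))
      = (1 / (2 * Real.log 2)) * (Real.exp (1/P) * Real.exp (-(1/P))) * gEi (1/P) by ring]
  rw [← Real.exp_add, add_neg_cancel, Real.exp_zero, mul_one]

lemma gEi_strictAnti : StrictAntiOn gEi (Ioi (0:ℝ)) := by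
  intro x hx y hy hxy
  have hx0 : (0:ℝ) < x := hx
  have hy0 : (0:ℝ) < y := hy
  have hdiff : 0 < ∫ s in Ioi (0:ℝ),
      (Real.exp (-s) / (x + s) - Real.exp (-s) / (y + s)) := by
    rw [setIntegral_pos_iff_support_of_nonneg_ae]
    · have hsupp : Function.support
          (fun s => Real.exp (-s) / (x + s) - Real.exp (-s) / (y + s)) ∩ Ioi 0 = Ioi 0 := by
        refine inter_eq_right.mpr fun s hs => ?_
        have hs0 : (0:ℝ) < s := hs
        have h1 : Real.exp (-s) / (y + s) < Real.exp (-s) / (x + s) := by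
          apply div_lt_div_of_pos_left (Real.exp_pos _) (by linarith) (by linarith)
        exact Function.mem_support.mpr (ne_of_gt (by linarith))
      rw [hsupp]
      exact Measure.measure_Ioi_pos _ 0
    · filter_upwards [ae_restrict_mem measurableSet_Ioi] with s hs
      have hs0 : (0:ℝ) < s := hs
      have : Real.exp (-s) / (y + s) ≤ Real.exp (-s) / (x + s) := by
        apply div_le_div_of_nonneg_left (Real.exp_pos _).le (by linarith) (by linarith)
      simp only [Pi.zero_apply]
      linarith
    · exact (gEi_integrable hx0).sub (gEi_integrable hy0)
  rw [integral_sub (gEi_integrable hx0) (gEi_integrable hy0)] at hdiff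
  unfold gEi
  linarith

/-- R_β is strictly positive and strictly increasing on P > 0. -/
theorem Rbeta_pos_strictMono :
    (∀ P : ℝ, 0 < P → 0 < Rbeta P) ∧ StrictMonoOn Rbeta (Ioi (0:ℝ)) := by
  have hc : 0 < 1 / (2 * Real.log 2) := by
    have := Real.log_pos (by norm_num : (1:ℝ) < 2)
    positivity
  constructor
  · intro P hP
    rw [Rbeta_eq hP]
    exact mul_pos hc (gEi_pos (by positivity))
  · intro P hP Q hQ hPQ
    have hP0 : (0:ℝ) < P := hP
    have hQ0 : (0:ℝ) < Q := hQ
    rw [Rbeta_eq hP0, Rbeta_eq hQ0]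
    apply mul_lt_mul_of_pos_left _ hc
    apply gEi_strictAnti (by simp [mem_Ioi]; positivity) (by simp [mem_Ioi]; positivity)
    exact one_div_lt_one_div_of_lt hP0 hPQ
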